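/- Let (X,Y) be a random couple of real numbers and (X̄,Ȳ) an independent copy. Let ε > 0 and assume ‖ρ_Y‖_{∞,ε} < ∞, where ρ_Y is the law of Y and ‖ρ‖_{∞,ε} := sup_x ρ([x-ε,x+ε])/(2ε). Then E[|K(X - X̄) - K(Y - Ȳ)|] ≤ 8 ‖ρ_Y‖_{∞,ε} (E[|X - Y|] + ε/2), where K(x) = (1/2)sign(x). -/

import Mathlib

open MeasureTheory ProbabilityTheory

noncomputable def K (x : ℝ) : ℝ := Real.sign x / 2

/-!
Where `|(X - X̄) - (Y - Ȳ)| < |Y - Ȳ|`, the differences `X - X̄` and `Y - Ȳ` have the same sign and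
the integrand vanishes. Elsewhere it is at most `1`, and `|Y - Ȳ| ≤ |X - Y| + |X̄ - Ȳ|` forces
`|Y - Ȳ| ≤ 2 |X - Y|` or `|Ȳ - Y| ≤ 2 |X̄ - Ȳ|`. By independence, given `(X, Y)` the first event
asks `Ȳ` to fall in an interval of radius `r = 2 |X - Y|`, which `⌊r / ε⌋ + 1` intervals of length
`2ε` cover; so it has probability at most `2M (2 E|X - Y| + ε)`, and by symmetry so does the second.
-/

open Set

lemma K_eq_K_of_abs_sub_lt_abs {a b : ℝ} (h : |a - b| < |b|) : K a = K b := by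
  rw [abs_lt] at h
  rcases lt_trichotomy b 0 with hb | rfl | hb
  · rw [abs_of_neg hb] at h
    rw [K, K, Real.sign_of_neg hb, Real.sign_of_neg (by linarith)]
  · linarith [h.1, h.2, abs_zero (α := ℝ)]
  · rw [abs_of_pos hb] at h
    rw [K, K, Real.sign_of_pos hb, Real.sign_of_pos (by linarith)]

lemma abs_K_sub_K_le_one (a b : ℝ) : |K a - K b| ≤ 1 := by
  rw [abs_le]
  rcases Real.sign_apply_eq a with ha | ha | ha <;>
    rcases Real.sign_apply_eq b with hb | hb | hb <;>
    simp only [K, ha, hb] <;> norm_num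

lemma abs_K_sub_K_le_indicator {α : Type*} {s : Set α} {ω : α} {a b : ℝ}
    (h : |b| ≤ |a - b| → ω ∈ s) : |K a - K b| ≤ s.indicator 1 ω := by
  by_cases hab : |b| ≤ |a - b|
  · simpa [indicator_of_mem (h hab)] using abs_K_sub_K_le_one a b
  · simp [K_eq_K_of_abs_sub_lt_abs (not_le.mp hab), indicator_nonneg]

lemma abs_K_sub_K_le_indicator_union {α : Type*} (X Y X' Y' : α → ℝ) (ω : α) :
    |K (X ω - X' ω) - K (Y ω - Y' ω)| ≤
      ({ω | |Y ω - Y' ω| ≤ 2 * |X ω - Y ω|} ∪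
        {ω | |Y' ω - Y ω| ≤ 2 * |X' ω - Y' ω|}).indicator 1 ω :=
  abs_K_sub_K_le_indicator fun h => by
    have : |X ω - X' ω - (Y ω - Y' ω)| ≤ |X ω - Y ω| + |X' ω - Y' ω| := by
      rw [show X ω - X' ω - (Y ω - Y' ω) = (X ω - Y ω) - (X' ω - Y' ω) by ring]
      exact abs_sub _ _
    rcases le_total |X ω - Y ω| |X' ω - Y' ω| with h' | h'
    · exact Or.inr (by simp only [mem_ofPred_eq, abs_sub_comm (Y' ω)]; linarith)
    · exact Or.inl (by simp only [mem_ofPred_eq]; linarith)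

lemma nonneg_of_measureReal_Icc_div_le {ν : Measure ℝ} {ε M : ℝ} (hε : 0 < ε)
    (hM : ∀ x, ν.real (Icc (x - ε) (x + ε)) / (2 * ε) ≤ M) : 0 ≤ M :=
  (div_nonneg measureReal_nonneg (by positivity)).trans (hM 0)

lemma measureReal_Icc_le_of_measureReal_Icc_div_le (ν : Measure ℝ) [IsFiniteMeasure ν]
    {ε M : ℝ} (hε : 0 < ε) (hM : ∀ x, ν.real (Icc (x - ε) (x + ε)) / (2 * ε) ≤ M)
    (y : ℝ) {r : ℝ} (hr : 0 ≤ r) :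
    ν.real (Icc (y - r) (y + r)) ≤ 2 * M * (r + ε) := by
  set n := ⌊r / ε⌋₊
  set c : ℕ → ℝ := fun k => y - r + (2 * k + 1) * ε
  have hcover : Icc (y - r) (y + r) ⊆ ⋃ k ∈ Finset.range (n + 1), Icc (c k - ε) (c k + ε) := by
    intro z ⟨hz₁, hz₂⟩
    have ht : 0 ≤ (z - (y - r)) / (2 * ε) := div_nonneg (by linarith) (by positivity)
    set k := ⌊(z - (y - r)) / (2 * ε)⌋₊
    have hk_le : k ≤ n := Nat.floor_le_floor <| by
      rw [div_le_div_iff₀ (by positivity) hε]; nlinarith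
    have hk₁ : (k : ℝ) * (2 * ε) ≤ z - (y - r) := (le_div_iff₀ (by positivity)).mp (Nat.floor_le ht)
    have hk₂ : z - (y - r) < (k + 1 : ℝ) * (2 * ε) :=
      (div_lt_iff₀ (by positivity)).mp (Nat.lt_floor_add_one _)
    exact mem_biUnion (Finset.mem_range.mpr (Nat.lt_succ_of_le hk_le))
      ⟨by simp only [c]; linarith, by simp only [c]; linarith⟩
  have hbox : ∀ k, ν.real (Icc (c k - ε) (c k + ε)) ≤ 2 * ε * M := fun k => by
    have := hM (c k); rwa [div_le_iff₀ (by positivity), mul_comm] at this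
  have hn : (n : ℝ) * ε ≤ r := (le_div_iff₀ hε).mp (Nat.floor_le (div_nonneg hr hε.le))
  have hM0 := nonneg_of_measureReal_Icc_div_le hε hM
  calc ν.real (Icc (y - r) (y + r))
      ≤ ∑ k ∈ Finset.range (n + 1), ν.real (Icc (c k - ε) (c k + ε)) :=
        (measureReal_mono hcover (measure_ne_top _ _)).trans (measureReal_biUnion_finset_le _ _)
    _ ≤ (n + 1) * (2 * ε * M) := by
        refine (Finset.sum_le_sum fun k _ => hbox k).trans_eq ?_
        simp
    _ ≤ 2 * M * (r + ε) := by nlinarith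

lemma measureReal_abs_sub_le_le_of_indepFun {Ω : Type*} [MeasurableSpace Ω] {μ : Measure Ω}
    [IsProbabilityMeasure μ] {V R Z : Ω → ℝ} (hV : Measurable V) (hR : Measurable R)
    (hZ : Measurable Z) (hR0 : 0 ≤ R) (hRint : Integrable R μ)
    (hind : IndepFun (fun ω => (V ω, R ω)) Z μ) {ε M : ℝ} (hε : 0 < ε)
    (hM : ∀ x, (μ.map Z).real (Icc (x - ε) (x + ε)) / (2 * ε) ≤ M) :
    μ.real {ω | |V ω - Z ω| ≤ R ω} ≤ 2 * M * (∫ ω, R ω ∂μ + ε) := by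
  set ν := μ.map Z
  have : IsProbabilityMeasure ν := Measure.isProbabilityMeasure_map hZ.aemeasurable
  have hVR : Measurable fun ω => (V ω, R ω) := hV.prodMk hR
  set S : Set ((ℝ × ℝ) × ℝ) := {p | |p.1.1 - p.2| ≤ p.1.2}
  have hS : MeasurableSet S :=
    measurableSet_le (measurable_fst.fst.sub measurable_snd).abs measurable_fst.snd
  have hsection : ∀ p : ℝ × ℝ, Prod.mk p ⁻¹' S = Icc (p.1 - p.2) (p.1 + p.2) := fun p => by
    ext z
    simp only [S, mem_preimage, mem_ofPred_eq, mem_Icc, abs_le]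
    constructor <;> rintro ⟨h₁, h₂⟩ <;> constructor <;> linarith
  have hM0 := nonneg_of_measureReal_Icc_div_le hε hM
  have hmeasure : μ {ω | |V ω - Z ω| ≤ R ω} ≤ ENNReal.ofReal (2 * M * (∫ ω, R ω ∂μ + ε)) :=
    calc μ {ω | |V ω - Z ω| ≤ R ω}
        = ((μ.map fun ω => (V ω, R ω)).prod ν) S := by
          rw [← (indepFun_iff_map_prod_eq_prod_map_map hVR.aemeasurable hZ.aemeasurable).mp hind,
            Measure.map_apply (hVR.prodMk hZ) hS]
          rfl
      _ = ∫⁻ p, ν (Icc (p.1 - p.2) (p.1 + p.2)) ∂(μ.map fun ω => (V ω, R ω)) := by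
          simp only [Measure.prod_apply hS, hsection]
      _ ≤ ∫⁻ ω, ν (Icc (V ω - R ω) (V ω + R ω)) ∂μ := lintegral_map_le _ _
      _ ≤ ∫⁻ ω, ENNReal.ofReal (2 * M * (R ω + ε)) ∂μ := lintegral_mono fun ω => by
          rw [← ofReal_measureReal]
          exact ENNReal.ofReal_le_ofReal
            (measureReal_Icc_le_of_measureReal_Icc_div_le ν hε hM (V ω) (hR0 ω))
      _ = ENNReal.ofReal (∫ ω, 2 * M * (R ω + ε) ∂μ) :=
          (ofReal_integral_eq_lintegral_ofReal
            (f := fun ω => 2 * M * (R ω + ε)) ((hRint.add (integrable_const ε)).const_mul _)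
            (ae_of_all _ fun ω => mul_nonneg (by linarith) (add_nonneg (hR0 ω) hε.le))).symm
      _ = ENNReal.ofReal (2 * M * (∫ ω, R ω ∂μ + ε)) := by
          rw [integral_const_mul, integral_add hRint (integrable_const ε)]
          simp
  exact ENNReal.toReal_le_of_le_ofReal
    (mul_nonneg (by linarith) (by linarith [integral_nonneg hR0 (μ := μ)])) hmeasure

lemma measureReal_abs_sub_le_two_mul_abs_sub_le {Ω : Type*} [MeasurableSpace Ω] {μ : Measure Ω}
    [IsProbabilityMeasure μ] {X Y X' Y' : Ω → ℝ} (hX : Measurable X) (hY : Measurable Y)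
    (hY' : Measurable Y') (hind : IndepFun (fun ω => (X ω, Y ω)) (fun ω => (X' ω, Y' ω)) μ)
    {ε M : ℝ} (hε : 0 < ε) (hM : ∀ x, (μ.map Y').real (Icc (x - ε) (x + ε)) / (2 * ε) ≤ M)
    (hint : Integrable (fun ω => |X ω - Y ω|) μ) :
    μ.real {ω | |Y ω - Y' ω| ≤ 2 * |X ω - Y ω|} ≤ 2 * M * (2 * ∫ ω, |X ω - Y ω| ∂μ + ε) := by
  have hdist : Measurable fun p : ℝ × ℝ => 2 * |p.1 - p.2| :=
    (measurable_fst.sub measurable_snd).abs.const_mul 2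
  have := measureReal_abs_sub_le_le_of_indepFun (R := fun ω => 2 * |X ω - Y ω|) hY
    (hdist.comp (hX.prodMk hY)) hY' (fun ω => mul_nonneg zero_le_two (abs_nonneg _))
    (hint.const_mul 2) (hind.comp (measurable_snd.prodMk hdist) measurable_snd) hε hM
  rwa [integral_const_mul] at this

theorem stmt_3 {Ω : Type*} [MeasureSpace Ω] (μ : Measure Ω) [IsProbabilityMeasure μ]
    (X Y Xb Yb : Ω → ℝ)
    (hX : Measurable X) (hY : Measurable Y) (hXb : Measurable Xb) (hYb : Measurable Yb)
    (h_indep : IndepFun (fun ω => (X ω, Y ω)) (fun ω => (Xb ω, Yb ω)) μ)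
    (h_copy : Measure.map (fun ω => (Xb ω, Yb ω)) μ = Measure.map (fun ω => (X ω, Y ω)) μ)
    (ε : ℝ) (hε : 0 < ε) (M : ℝ)
    (hM : ∀ x : ℝ, ((Measure.map Y μ) (Set.Icc (x - ε) (x + ε))).toReal / (2 * ε) ≤ M)
    (h_int : Integrable (fun ω => |X ω - Y ω|) μ) :
    (∫ ω, |K (X ω - Xb ω) - K (Y ω - Yb ω)| ∂μ)
      ≤ 8 * M * ((∫ ω, |X ω - Y ω| ∂μ) + ε / 2) := by
  have hcopy : IdentDistrib (fun ω => (Xb ω, Yb ω)) (fun ω => (X ω, Y ω)) μ μ :=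
    ⟨(hXb.prodMk hYb).aemeasurable, (hX.prodMk hY).aemeasurable, h_copy⟩
  have hYb_law : μ.map Yb = μ.map Y := (hcopy.comp measurable_snd).map_eq
  have hdist_copy : IdentDistrib (fun ω => |Xb ω - Yb ω|) (fun ω => |X ω - Y ω|) μ μ :=
    hcopy.comp (measurable_fst.sub measurable_snd).abs
  have hE₁ := measureReal_abs_sub_le_two_mul_abs_sub_le hX hY hYb h_indep hε
    (fun x => by rw [hYb_law]; exact hM x) h_int
  have hE₂ := measureReal_abs_sub_le_two_mul_abs_sub_le hXb hYb hY h_indep.symm hε hM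
    (hdist_copy.integrable_iff.mpr h_int)
  rw [hdist_copy.integral_eq] at hE₂
  set E₁ := {ω | |Y ω - Yb ω| ≤ 2 * |X ω - Y ω|}
  set E₂ := {ω | |Yb ω - Y ω| ≤ 2 * |Xb ω - Yb ω|}
  have hE : MeasurableSet (E₁ ∪ E₂) :=
    (measurableSet_le (hY.sub hYb).abs ((hX.sub hY).abs.const_mul 2)).union
      (measurableSet_le (hYb.sub hY).abs ((hXb.sub hYb).abs.const_mul 2))
  calc ∫ ω, |K (X ω - Xb ω) - K (Y ω - Yb ω)| ∂μ
      ≤ ∫ ω, (E₁ ∪ E₂).indicator 1 ω ∂μ :=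
        integral_mono_of_nonneg (ae_of_all _ fun ω => abs_nonneg _)
          ((integrable_const 1).indicator hE)
          (ae_of_all _ (abs_K_sub_K_le_indicator_union X Y Xb Yb))
    _ ≤ μ.real E₁ + μ.real E₂ := (integral_indicator_one hE).trans_le (measureReal_union_le _ _)
    _ ≤ 8 * M * ((∫ ω, |X ω - Y ω| ∂μ) + ε / 2) := by linarith
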